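/- The 3×3 real matrix A_p^LS satisfies: A_p^LS·(0,1,0)ᵀ = −(γ−1)u·(0,1,0)ᵀ, A_p^LS·(1,0,−u²/2)ᵀ = 0, and A_p^LS·(0,1,u)ᵀ = 0; moreover, if u ≠ 0 and γ ≠ 1, the three vectors (0,1,0), (1,0,−u²/2), (0,1,u) are linearly independent, so A_p^LS possesses a complete set of linearly independent eigenvectors with eigenvalues −(γ−1)u, 0, 0. -/

import Mathlib

/-- The Liou–Steffen pressure flux Jacobian of the 1-D Euler system. -/
noncomputable def ApLS (u γ : ℝ) : Matrix (Fin 3) (Fin 3) ℝ :=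
  !![0, 0, 0;
     (γ-1)*u^2/2, -(γ-1)*u, γ-1;
     0, 0, 0]

/-- `A_p^LS` has eigenvectors `(0,1,0)`, `(1,0,−u²/2)`, `(0,1,u)` with eigenvalues
`−(γ−1)u, 0, 0`, and for `u ≠ 0`, `γ ≠ 1` these three eigenvectors are linearly
independent, i.e. `A_p^LS` has a complete set of linearly independent eigenvectors. -/
theorem eigenvectors_ApLS (u γ : ℝ) :
    (ApLS u γ).mulVec ![0, 1, 0] = (-(γ-1)*u) • ![0, 1, 0] ∧
    (ApLS u γ).mulVec ![1, 0, -u^2/2] = 0 ∧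
    (ApLS u γ).mulVec ![0, 1, u] = 0 ∧
    (u ≠ 0 → γ ≠ 1 →
      LinearIndependent ℝ ![![0, 1, 0], ![1, 0, -u^2/2], ![(0:ℝ), 1, u]]) := by
  refine ⟨?_, ?_, ?_, ?_⟩
  · funext i
    fin_cases i <;> simp [ApLS, Matrix.mulVec, dotProduct, Fin.sum_univ_three] <;> ring
  · funext i
    fin_cases i <;> simp [ApLS, Matrix.mulVec, dotProduct, Fin.sum_univ_three] <;> ring
  · funext i
    fin_cases i <;> simp [ApLS, Matrix.mulVec, dotProduct, Fin.sum_univ_three] <;> ring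
  · intro hu hγ
    have : ![![0, 1, 0], ![1, 0, -u^2/2], ![(0:ℝ), 1, u]] =
        (Matrix.of ![![0, 1, 0], ![1, 0, -u^2/2], ![(0:ℝ), 1, u]]) := rfl
    rw [this]
    have hdet : (Matrix.of ![![0, 1, 0], ![1, 0, -u^2/2], ![(0:ℝ), 1, u]]).det = -u := by
      simp [Matrix.det_fin_three]
    rw [show ((Matrix.of ![![0, 1, 0], ![1, 0, -u^2/2], ![(0:ℝ), 1, u]]) :
        Fin 3 → Fin 3 → ℝ) = fun i => (Matrix.of ![![0, 1, 0], ![1, 0, -u^2/2],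
        ![(0:ℝ), 1, u]]) i from rfl]
    refine (Matrix.linearIndependent_rows_iff_isUnit (A := Matrix.of ![![0, 1, 0], ![1, 0, -u^2/2], ![(0:ℝ), 1, u]])).mpr ?_
    rw [Matrix.isUnit_iff_isUnit_det, hdet, isUnit_iff_ne_zero]
    simpa using hu
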